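/- Let X be a Poisson random variable with parameter γ > 0 and let α ∈ (0,1). If γ ≥ (8/3) log(2/α), then P(|X - γ| ≤ √((8/3)γ log(2/α))) ≥ 1 - α. -/

import Mathlib

/-! Chernoff's bound with the Poisson moment generating function `exp (r (eˢ - 1))`, evaluated at
`eˢ = 1 + x`, bounds the upper tail `X ≥ r (1 + x)` (for `x ≥ 0`) and the lower tail
`X ≤ r (1 + x)` (for `-1 < x ≤ 0`) by `exp (-r h(x))`, where `h = bennettFun`.
Elementary calculus gives `h(x) ≥ x² / (2 (1 + x / 3))` for `x ≥ 0` and `h(x) ≥ x² / 2` for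
`x ≤ 0`, so for a deviation `t ≤ r` each tail has probability at most `exp (-3 t² / (8 r))`.
With `t = √((8/3) γ log (2/α))` this is `α / 2`. -/

open MeasureTheory ProbabilityTheory Real Set
open scoped NNReal Nat

noncomputable def bennettFun (x : ℝ) : ℝ := (1 + x) * log (1 + x) - x

theorem le_of_hasDerivAt_nonneg {f f' : ℝ → ℝ} {a b : ℝ} (hab : a ≤ b)
    (hf : ∀ x ∈ Icc a b, HasDerivAt f (f' x) x) (hf' : ∀ x ∈ Ioo a b, 0 ≤ f' x) :
    f a ≤ f b :=
  monotoneOn_of_hasDerivWithinAt_nonneg (convex_Icc a b)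
    (fun x hx => (hf x hx).continuousAt.continuousWithinAt)
    (fun x hx => (hf x (interior_subset hx)).hasDerivWithinAt)
    (fun x hx => hf' x (by rwa [interior_Icc] at hx))
    (left_mem_Icc.2 hab) (right_mem_Icc.2 hab) hab

theorem hasDerivAt_log_one_add {x : ℝ} (hx : -1 < x) :
    HasDerivAt (fun y => log (1 + y)) (1 + x)⁻¹ x :=
  ((hasDerivAt_id x).const_add 1).log (by simp only [id]; linarith) |>.congr_deriv (one_div _)

theorem hasDerivAt_bennettFun {x : ℝ} (hx : -1 < x) :
    HasDerivAt bennettFun (log (1 + x)) x := by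
  refine (((hasDerivAt_id x).const_add 1).mul (hasDerivAt_log_one_add hx)).sub
    (hasDerivAt_id x) |>.congr_deriv ?_
  rw [id, mul_inv_cancel₀ (by linarith)]
  ring

theorem two_mul_le_two_add_mul_log_one_add {x : ℝ} (hx : 0 ≤ x) :
    2 * x ≤ (2 + x) * log (1 + x) := by
  have key := le_of_hasDerivAt_nonneg (f := fun y => (2 + y) * log (1 + y) - 2 * y)
    (f' := fun y => log (1 + y) - (1 - (1 + y)⁻¹)) hx
    (fun y hy => by
      refine (((hasDerivAt_id y).const_add 2).mul (hasDerivAt_log_one_add (by linarith [hy.1]))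
        |>.sub ((hasDerivAt_id y).const_mul 2)).congr_deriv ?_
      have : 1 + y ≠ 0 := by linarith [hy.1]
      simp only [id]
      field_simp
      ring)
    (fun y hy => sub_nonneg.2 (one_sub_inv_le_log_of_pos (by linarith [hy.1])))
  norm_num at key
  linarith

theorem sq_div_le_bennettFun {x : ℝ} (hx : 0 ≤ x) :
    x ^ 2 / (2 * (1 + x / 3)) ≤ bennettFun x := by
  have key := le_of_hasDerivAt_nonneg (f := fun y => (6 + 2 * y) * bennettFun y - 3 * y ^ 2)
    (f' := fun y => (8 + 4 * y) * log (1 + y) - 8 * y) hx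
    (fun y hy => by
      refine (((hasDerivAt_id y).const_mul 2).const_add 6 |>.mul
        (hasDerivAt_bennettFun (by linarith [hy.1])) |>.sub
          ((hasDerivAt_pow 2 y).const_mul 3)).congr_deriv ?_
      simp only [bennettFun, id]
      ring)
    (fun y hy => by nlinarith [two_mul_le_two_add_mul_log_one_add hy.1.le])
  norm_num [bennettFun] at key
  rw [div_le_iff₀ (by positivity), bennettFun]
  linarith

theorem sq_div_two_le_bennettFun {x : ℝ} (hx1 : -1 < x) (hx : x ≤ 0) :
    x ^ 2 / 2 ≤ bennettFun x := by
  have key := le_of_hasDerivAt_nonneg (f := fun y => y ^ 2 / 2 - bennettFun y)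
    (f' := fun y => y - log (1 + y)) hx
    (fun y hy => (hasDerivAt_pow 2 y).div_const 2 |>.sub
      (hasDerivAt_bennettFun (by linarith [hy.1])) |>.congr_deriv (by ring))
    (fun y hy => by linarith [log_le_sub_one_of_pos (x := 1 + y) (by linarith [hy.1])])
  norm_num [bennettFun] at key
  rw [bennettFun]
  linarith

namespace ProbabilityTheory

theorem poissonPMF_toMeasure (r : ℝ≥0) : (poissonPMF r).toMeasure = poissonMeasure r := by
  refine Measure.ext_iff_singleton.2 fun n => ?_
  rw [PMF.toMeasure_apply_singleton _ _ (measurableSet_singleton n), poissonMeasure_singleton]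
  rfl

theorem hasSum_poissonMeasure_exp_mul (r : ℝ≥0) (t : ℝ) :
    HasSum (fun n : ℕ => exp (-r) * r ^ n / n ! * exp (t * n)) (exp (r * (exp t - 1))) := by
  have h := (NormedSpace.expSeries_div_hasSum_exp ((r : ℝ) * exp t)).mul_left (exp (-r))
  have hterm : (fun n : ℕ => exp (-r) * r ^ n / n ! * exp (t * n)) =
      fun n => exp (-r) * ((r * exp t) ^ n / n !) := by
    funext n
    rw [mul_pow, ← exp_nat_mul]
    ring_nf
  rw [← exp_eq_exp_ℝ, ← exp_add] at h
  rwa [hterm, show (r : ℝ) * (exp t - 1) = -r + r * exp t by ring]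

theorem mgf_poissonMeasure (r : ℝ≥0) (t : ℝ) :
    mgf (fun n : ℕ => (n : ℝ)) (poissonMeasure r) t = exp (r * (exp t - 1)) := by
  rw [mgf, integral_poissonMeasure]
  exact (hasSum_poissonMeasure_exp_mul r t).tsum_eq

theorem integrable_exp_mul_poissonMeasure (r : ℝ≥0) (t : ℝ) :
    Integrable (fun n : ℕ => exp (t * n)) (poissonMeasure r) := by
  rw [integrable_poissonMeasure_iff]
  simpa using (hasSum_poissonMeasure_exp_mul r t).summable

theorem exp_mul_mgf_poissonMeasure_log_one_add (r : ℝ≥0) {x : ℝ} (hx : -1 < x) :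
    exp (-log (1 + x) * (r * (1 + x))) * mgf (fun n : ℕ => (n : ℝ)) (poissonMeasure r)
      (log (1 + x)) = exp (-(r * bennettFun x)) := by
  rw [mgf_poissonMeasure, exp_log (by linarith), ← exp_add, bennettFun]
  ring_nf

theorem poissonMeasure_real_ge_le (r : ℝ≥0) {x : ℝ} (hx : 0 ≤ x) :
    (poissonMeasure r).real {n | r * (1 + x) ≤ n} ≤ exp (-(r * bennettFun x)) := by
  rw [← exp_mul_mgf_poissonMeasure_log_one_add r (by linarith)]
  exact measure_ge_le_exp_mul_mgf _ (log_nonneg (by linarith))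
    (integrable_exp_mul_poissonMeasure r _)

theorem poissonMeasure_real_le_le (r : ℝ≥0) {x : ℝ} (hx1 : -1 < x) (hx : x ≤ 0) :
    (poissonMeasure r).real {n | n ≤ r * (1 + x)} ≤ exp (-(r * bennettFun x)) := by
  rw [← exp_mul_mgf_poissonMeasure_log_one_add r hx1]
  exact measure_le_le_exp_mul_mgf _ (log_nonpos (by linarith) (by linarith))
    (integrable_exp_mul_poissonMeasure r _)

theorem poissonMeasure_real_ge_add_le {r : ℝ≥0} (hr : 0 < r) {t : ℝ} (ht : 0 ≤ t) :
    (poissonMeasure r).real {n | r + t ≤ n} ≤ exp (-(t ^ 2 / (2 * (r + t / 3)))) := by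
  have hr' : (0 : ℝ) < r := hr
  have h := poissonMeasure_real_ge_le r (div_nonneg ht hr'.le)
  have hb := mul_le_mul_of_nonneg_left (sq_div_le_bennettFun (div_nonneg ht hr'.le)) hr'.le
  rw [mul_add, mul_div_cancel₀ _ hr'.ne', mul_one] at h
  refine h.trans (exp_le_exp.2 (neg_le_neg (hb.trans_eq' ?_)))
  field_simp

theorem poissonMeasure_real_lt_sub_le (r : ℝ≥0) {t : ℝ} (ht : 0 ≤ t) :
    (poissonMeasure r).real {n | n < r - t} ≤ exp (-(t ^ 2 / (2 * r))) := by
  rcases lt_or_ge t r with htr | hrt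
  · have hr' : (0 : ℝ) < r := ht.trans_lt htr
    have hx1 : -1 < -t / r := by rw [neg_div, neg_lt_neg_iff, div_lt_one hr']; exact htr
    have h := poissonMeasure_real_le_le r hx1 (div_nonpos_of_nonpos_of_nonneg (by linarith) hr'.le)
    have hb := mul_le_mul_of_nonneg_left (sq_div_two_le_bennettFun hx1
      (div_nonpos_of_nonpos_of_nonneg (by linarith) hr'.le)) hr'.le
    rw [mul_add, mul_div_cancel₀ _ hr'.ne', mul_one, ← sub_eq_add_neg] at h
    have hsub : {n : ℕ | (n : ℝ) < r - t} ⊆ {n | (n : ℝ) ≤ r - t} :=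
      fun n (hn : (n : ℝ) < r - t) => hn.le
    refine (measureReal_mono hsub).trans (h.trans ?_)
    refine exp_le_exp.2 (neg_le_neg (hb.trans_eq' ?_))
    field_simp
  · have hempty : {n : ℕ | (n : ℝ) < r - t} = ∅ :=
      eq_empty_of_forall_notMem fun n (hn : (n : ℝ) < r - t) => by
        linarith [Nat.cast_nonneg (α := ℝ) n]
    rw [hempty, measureReal_empty]
    exact (exp_pos _).le

theorem poissonMeasure_real_lt_abs_sub_le {r : ℝ≥0} (hr : 0 < r) {t : ℝ} (ht : 0 ≤ t)
    (htr : t ≤ r) :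
    (poissonMeasure r).real {n | t < |(n : ℝ) - r|} ≤ 2 * exp (-(3 * t ^ 2 / (8 * r))) := by
  have hr' : (0 : ℝ) < r := hr
  have hsub : {n : ℕ | t < |(n : ℝ) - r|} ⊆ {n | r + t ≤ n} ∪ {n | n < r - t} := by
    intro n (hn : t < |(n : ℝ) - r|)
    rcases lt_abs.1 hn with h | h
    · exact Or.inl (show (r : ℝ) + t ≤ n by linarith)
    · exact Or.inr (show (n : ℝ) < r - t by linarith)
  have hexp : ∀ c : ℝ, 0 < c → c ≤ 8 * r / 3 →
      exp (-(t ^ 2 / c)) ≤ exp (-(3 * t ^ 2 / (8 * r))) :=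
    fun c hc hc' => exp_le_exp.2 (neg_le_neg (by
      rw [div_le_div_iff₀ (by positivity) hc]; nlinarith [sq_nonneg t]))
  calc (poissonMeasure r).real {n | t < |(n : ℝ) - r|}
      ≤ (poissonMeasure r).real {n | r + t ≤ n} + (poissonMeasure r).real {n | n < r - t} :=
        (measureReal_mono hsub).trans (measureReal_union_le _ _)
    _ ≤ exp (-(t ^ 2 / (2 * (r + t / 3)))) + exp (-(t ^ 2 / (2 * r))) :=
        add_le_add (poissonMeasure_real_ge_add_le hr ht) (poissonMeasure_real_lt_sub_le r ht)
    _ ≤ 2 * exp (-(3 * t ^ 2 / (8 * r))) := by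
        refine (add_le_add (hexp (2 * (r + t / 3)) (by linarith) (by linarith))
          (hexp (2 * r) (by linarith) (by linarith))).trans_eq (two_mul _).symm

end ProbabilityTheory

theorem poisson_two_sided_high_prob_general {Ω : Type*} [MeasurableSpace Ω]
    (P : Measure Ω)
    (γ : ℝ) (X : Ω → ℕ)
    (hX : Measure.map X P = (poissonPMF γ.toNNReal).toMeasure)
    (α : ℝ) (hα : α ∈ Set.Ioo (0 : ℝ) 1)
    (hγα : 8 / 3 * Real.log (2 / α) ≤ γ) :
    1 - ENNReal.ofReal α ≤
      P {ω | |(X ω : ℝ) - γ| ≤ Real.sqrt (8 / 3 * γ * Real.log (2 / α))} := by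
  obtain ⟨hα0, hα1⟩ := hα
  set L := log (2 / α)
  have hL : 0 < L := log_pos (by rw [lt_div_iff₀ hα0]; linarith)
  have hγ : 0 < γ := by linarith
  have hr : (γ.toNNReal : ℝ) = γ := coe_toNNReal γ hγ.le
  set t := √(8 / 3 * γ * L)
  have ht2 : t ^ 2 = 8 / 3 * γ * L := sq_sqrt (by positivity)
  have htγ : t ≤ γ := sqrt_le_iff.2 ⟨hγ.le, by nlinarith⟩
  have hbad : (poissonMeasure γ.toNNReal).real {n | t < |(n : ℝ) - γ|} ≤ α := by
    have h := poissonMeasure_real_lt_abs_sub_le (toNNReal_pos.2 hγ) (sqrt_nonneg _) (hr ▸ htγ)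
    rwa [hr, ht2, show 3 * (8 / 3 * γ * L) / (8 * γ) = L by field_simp, exp_neg,
      exp_log (by positivity), inv_div, mul_div_cancel₀ _ two_ne_zero] at h
  have hlaw : P.map X = poissonMeasure γ.toNNReal := hX.trans (poissonPMF_toMeasure _)
  have hXm : AEMeasurable X P := aemeasurable_of_map_neZero (by rw [hlaw]; infer_instance)
  calc 1 - ENNReal.ofReal α
      ≤ 1 - poissonMeasure γ.toNNReal {n | t < |(n : ℝ) - γ|} := by
        rw [← ofReal_measureReal]
        exact tsub_le_tsub_left (ENNReal.ofReal_le_ofReal hbad) 1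
    _ = poissonMeasure γ.toNNReal {n | t < |(n : ℝ) - γ|}ᶜ :=
        (prob_compl_eq_one_sub .of_discrete).symm
    _ = P {ω | |(X ω : ℝ) - γ| ≤ t} := by
        rw [← hlaw, Measure.map_apply_of_aemeasurable hXm .of_discrete]
        simp only [compl_ofPred, not_lt, preimage_ofPred_eq]

/-- Let `X` be Poisson with parameter `γ > 0` and `α ∈ (0,1)`.
If `γ ≥ (8/3) log(2/α)`, then `P(|X - γ| ≤ √((8/3)γ log(2/α))) ≥ 1 - α`. -/
theorem poisson_two_sided_high_prob {Ω : Type*} [MeasurableSpace Ω]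
    (P : Measure Ω) [IsProbabilityMeasure P]
    (γ : ℝ) (hγ : 0 < γ) (X : Ω → ℕ)
    (hX : Measure.map X P = (poissonPMF γ.toNNReal).toMeasure)
    (α : ℝ) (hα : α ∈ Set.Ioo (0 : ℝ) 1)
    (hγα : 8 / 3 * Real.log (2 / α) ≤ γ) :
    1 - ENNReal.ofReal α ≤
      P {ω | |(X ω : ℝ) - γ| ≤ Real.sqrt (8 / 3 * γ * Real.log (2 / α))} :=
  poisson_two_sided_high_prob_general P γ X hX α hα hγα
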